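/- For every n ≥ 1 and every real p with 1 ≤ p ≤ 2, the linear cylindrical capacity of the unit ball B_p^{2n} = {x ∈ ℝ^{2n} : Σ_{i=1}^{2n} |x_i|^p ≤ 1} satisfies c^Z_lin(B_p^{2n}) ≤ 2π·(2n)^{1−2/p}. -/

import Mathlib

open MeasureTheory Metric
open scoped BigOperators

noncomputable section

/-- A convex body: compact convex set with nonempty interior. -/
def IsConvexBody {d : ℕ} (K : Set (EuclideanSpace ℝ (Fin d))) : Prop :=
  IsCompact K ∧ Convex ℝ K ∧ (interior K).Nonempty

/-- The standard symplectic form on `ℝ^{2n}` with coordinates ordered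
`(x₁, y₁, …, xₙ, yₙ)`: `ω = ∑ dxⱼ ∧ dyⱼ`. -/
def symplForm (n : ℕ) (u v : EuclideanSpace ℝ (Fin (2 * n))) : ℝ :=
  ∑ j : Fin n,
    (u ⟨2 * (j : ℕ), by have := j.isLt; omega⟩ * v ⟨2 * (j : ℕ) + 1, by have := j.isLt; omega⟩
      - u ⟨2 * (j : ℕ) + 1, by have := j.isLt; omega⟩ * v ⟨2 * (j : ℕ), by have := j.isLt; omega⟩)

/-- A linear map of `ℝ^{2n}` is symplectic if it preserves the standard symplectic form. -/
def IsLinearSymplectic (n : ℕ)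
    (S : EuclideanSpace ℝ (Fin (2 * n)) →ₗ[ℝ] EuclideanSpace ℝ (Fin (2 * n))) : Prop :=
  ∀ u v, symplForm n (S u) (S v) = symplForm n u v

/-- The `k`-th coordinate of a vector (with value `0` if `k` is out of range). -/
def coordOr {m : ℕ} (x : EuclideanSpace ℝ (Fin m)) (k : ℕ) : ℝ :=
  if h : k < m then x ⟨k, h⟩ else 0

/-- The open symplectic cylinder `Z(r) = {x : x₁² + x₂² < r²}`. -/
def symplCylinder (n : ℕ) (r : ℝ) : Set (EuclideanSpace ℝ (Fin (2 * n))) :=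
  {x | coordOr x 0 ^ 2 + coordOr x 1 ^ 2 < r ^ 2}

/-- The linear cylindrical capacity. -/
def linCylCapacity (n : ℕ) (U : Set (EuclideanSpace ℝ (Fin (2 * n)))) : ℝ :=
  sInf {c : ℝ | ∃ r : ℝ, 0 < r ∧ c = Real.pi * r ^ 2 ∧
    ∃ S : EuclideanSpace ℝ (Fin (2 * n)) →ₗ[ℝ] EuclideanSpace ℝ (Fin (2 * n)),
      IsLinearSymplectic n S ∧ S '' U ⊆ symplCylinder n r}

/-- The linear symplectic radius. -/
def linSymplRadius (n : ℕ) (U : Set (EuclideanSpace ℝ (Fin (2 * n)))) : ℝ :=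
  sSup {c : ℝ | ∃ r : ℝ, 0 < r ∧ c = Real.pi * r ^ 2 ∧
    ∃ S : EuclideanSpace ℝ (Fin (2 * n)) →ₗ[ℝ] EuclideanSpace ℝ (Fin (2 * n)),
      IsLinearSymplectic n S ∧ S '' (closedBall (0 : EuclideanSpace ℝ (Fin (2 * n))) r) ⊆ U}

/-- The standard complex structure `J` on `ℝ^{2n}`, sending
`(x₁,y₁,…,xₙ,yₙ)` to `(−y₁,x₁,…,−yₙ,xₙ)`. -/
def Jstd (n : ℕ) (x : EuclideanSpace ℝ (Fin (2 * n))) : EuclideanSpace ℝ (Fin (2 * n)) :=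
  WithLp.toLp 2 (fun i : Fin (2 * n) => if h : (i : ℕ) % 2 = 0
    then - x ⟨(i : ℕ) + 1, by have := i.isLt; omega⟩
    else x ⟨(i : ℕ) - 1, by have := i.isLt; omega⟩)

/-- The support function `x ↦ sup_{y ∈ K} ⟨x, y⟩`. -/
def suppF {d : ℕ} (K : Set (EuclideanSpace ℝ (Fin d))) (x : EuclideanSpace ℝ (Fin d)) : ℝ :=
  sSup ((fun y => (inner ℝ x y : ℝ)) '' K)

/-- The sign vector `ε ∈ {−1/√(2n), 1/√(2n)}^{2n}` associated to `ε : Fin (2n) → Bool`. -/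
def signVec (n : ℕ) (ε : Fin (2 * n) → Bool) : EuclideanSpace ℝ (Fin (2 * n)) :=
  WithLp.toLp 2 (fun i => (if ε i then 1 else -1) / Real.sqrt (2 * n))

/-- The normalized Rademacher average `s*(K)`. -/
def sStar (n : ℕ) (K : Set (EuclideanSpace ℝ (Fin (2 * n)))) : ℝ :=
  (1 / 2 ^ (2 * n)) * ∑ ε : Fin (2 * n) → Bool, suppF K (signVec n ε)

/-- The rotation-invariant probability measure on the unit sphere of `ℝ^{2n}`. -/
def sphereProb (n : ℕ) : Measure (sphere (0 : EuclideanSpace ℝ (Fin (2 * n))) 1) :=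
  ((volume : Measure (EuclideanSpace ℝ (Fin (2 * n)))).toSphere Set.univ)⁻¹ •
    (volume : Measure (EuclideanSpace ℝ (Fin (2 * n)))).toSphere

/-- Half the mean width `M*(K)`. -/
def mStar (n : ℕ) (K : Set (EuclideanSpace ℝ (Fin (2 * n)))) : ℝ :=
  ∫ x : sphere (0 : EuclideanSpace ℝ (Fin (2 * n))) 1, suppF K (x : EuclideanSpace ℝ (Fin (2 * n))) ∂(sphereProb n)

/-- The sign `±1` of a boolean. -/
def radSign (b : Bool) : ℝ := if b then 1 else -1

/-- Squared `L²({−1,1}^m, μ; X_K)`-norm of `f`, with respect to the norm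
(Minkowski gauge) whose unit ball is `K` and the uniform probability measure `μ`. -/
def radL2Sq {d : ℕ} (m : ℕ) (K : Set (EuclideanSpace ℝ (Fin d)))
    (f : (Fin m → Bool) → EuclideanSpace ℝ (Fin d)) : ℝ :=
  (1 / 2 ^ m) * ∑ t : Fin m → Bool, gauge K (f t) ^ 2

/-- The Rademacher projection `R_m f = ∑ᵢ (∫ f rᵢ dμ) rᵢ`. -/
def radProj {d : ℕ} (m : ℕ) (f : (Fin m → Bool) → EuclideanSpace ℝ (Fin d)) :
    (Fin m → Bool) → EuclideanSpace ℝ (Fin d) :=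
  fun t => ∑ i : Fin m,
    radSign (t i) • ((1 / 2 ^ m : ℝ) • ∑ s : Fin m → Bool, radSign (s i) • f s)

/-- The Rademacher projection (K-convexity) constant `‖Rad‖_{X_K}` of the normed
space whose unit ball is `K`: `sup_m ‖R_m‖`. -/
def radConst {d : ℕ} (K : Set (EuclideanSpace ℝ (Fin d))) : ℝ :=
  sSup {c : ℝ | ∃ m : ℕ, ∃ f : (Fin m → Bool) → EuclideanSpace ℝ (Fin d),
    radL2Sq m K f ≤ 1 ∧ c = Real.sqrt (radL2Sq m K (radProj m f))}

/-- Volume ratio `Vol(K)/Vol(B^{2n})`. -/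
def volRatio {d : ℕ} (K : Set (EuclideanSpace ℝ (Fin d))) : ℝ :=
  (volume K).toReal / (volume (closedBall (0 : EuclideanSpace ℝ (Fin d)) 1)).toReal


noncomputable def s16c (n : ℕ) : ℝ := 1 / Real.sqrt n
noncomputable def s16w (n : ℕ) (j : Fin n) : ℝ := (if (j : ℕ) = 0 then 1 else 0) - s16c n
noncomputable def s16t (n : ℕ) : ℝ := 1 / (1 - s16c n)
noncomputable def s16E (n : ℕ) (x : EuclideanSpace ℝ (Fin (2 * n))) : ℝ :=
  ∑ j : Fin n, s16w n j * x ⟨2 * (j : ℕ), by have := j.isLt; omega⟩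
noncomputable def s16O (n : ℕ) (x : EuclideanSpace ℝ (Fin (2 * n))) : ℝ :=
  ∑ j : Fin n, s16w n j * x ⟨2 * (j : ℕ) + 1, by have := j.isLt; omega⟩
lemma s16E_add (n : ℕ) (x y : EuclideanSpace ℝ (Fin (2 * n))) :
    s16E n (x + y) = s16E n x + s16E n y := by
  simp [s16E, PiLp.add_apply, mul_add, Finset.sum_add_distrib]
lemma s16O_add (n : ℕ) (x y : EuclideanSpace ℝ (Fin (2 * n))) :
    s16O n (x + y) = s16O n x + s16O n y := by
  simp [s16O, PiLp.add_apply, mul_add, Finset.sum_add_distrib]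
lemma s16E_smul (n : ℕ) (r : ℝ) (x : EuclideanSpace ℝ (Fin (2 * n))) :
    s16E n (r • x) = r * s16E n x := by
  simp [s16E, PiLp.smul_apply, Finset.mul_sum, smul_eq_mul]
  exact Finset.sum_congr rfl fun j _ => by ring
lemma s16O_smul (n : ℕ) (r : ℝ) (x : EuclideanSpace ℝ (Fin (2 * n))) :
    s16O n (r • x) = r * s16O n x := by
  simp [s16O, PiLp.smul_apply, Finset.mul_sum, smul_eq_mul]
  exact Finset.sum_congr rfl fun j _ => by ring
noncomputable def s16S (n : ℕ) :
    EuclideanSpace ℝ (Fin (2 * n)) →ₗ[ℝ] EuclideanSpace ℝ (Fin (2 * n)) where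
  toFun x := WithLp.toLp 2 (fun i => x i - s16t n * (if (i : ℕ) % 2 = 0 then s16E n x else s16O n x)
      * s16w n ⟨(i : ℕ) / 2, by have := i.isLt; omega⟩)
  map_add' x y := by
    ext i
    simp only [PiLp.toLp_apply, PiLp.add_apply, s16E_add, s16O_add]
    split <;> ring
  map_smul' r x := by
    ext i
    simp only [PiLp.toLp_apply, PiLp.smul_apply, s16E_smul, s16O_smul, smul_eq_mul, RingHom.id_apply]
    split <;> ring
lemma s16S_even (n : ℕ) (x : EuclideanSpace ℝ (Fin (2 * n))) (j : Fin n)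
    (h : 2 * (j : ℕ) < 2 * n) :
    s16S n x ⟨2 * (j : ℕ), h⟩ =
      x ⟨2 * (j : ℕ), h⟩ - s16t n * s16E n x * s16w n j := by
  have h3 : s16w n ⟨2 * (j : ℕ) / 2, by have := j.isLt; omega⟩ = s16w n j :=
    congrArg (s16w n) (Fin.ext (by show 2 * (j : ℕ) / 2 = (j : ℕ); omega))
  show x _ - s16t n * (if (2 * (j : ℕ)) % 2 = 0 then s16E n x else s16O n x) * s16w n _ = _
  rw [if_pos (by simp [Nat.mul_mod_right]), h3]

lemma s16S_odd (n : ℕ) (x : EuclideanSpace ℝ (Fin (2 * n))) (j : Fin n)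
    (h : 2 * (j : ℕ) + 1 < 2 * n) :
    s16S n x ⟨2 * (j : ℕ) + 1, h⟩ =
      x ⟨2 * (j : ℕ) + 1, h⟩ - s16t n * s16O n x * s16w n j := by
  have h3 : s16w n ⟨(2 * (j : ℕ) + 1) / 2, by have := j.isLt; omega⟩ = s16w n j :=
    congrArg (s16w n) (Fin.ext (by show (2 * (j : ℕ) + 1) / 2 = (j : ℕ); omega))
  show x _ - s16t n * (if (2 * (j : ℕ) + 1) % 2 = 0 then s16E n x else s16O n x) * s16w n _ = _
  rw [if_neg (by show ¬ (2 * (j : ℕ) + 1) % 2 = 0; omega), h3]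


lemma sum_reflect (n : ℕ) (w a b c d : Fin n → ℝ) (t : ℝ)
    (h : t * t * (∑ j : Fin n, w j * w j) = 2 * t) :
    ∑ j : Fin n, ((a j - t * (∑ i : Fin n, w i * a i) * w j)
        * (b j - t * (∑ i : Fin n, w i * b i) * w j)
      - (c j - t * (∑ i : Fin n, w i * c i) * w j)
        * (d j - t * (∑ i : Fin n, w i * d i) * w j))
    = ∑ j : Fin n, (a j * b j - c j * d j) := by
  set A := ∑ i : Fin n, w i * a i with hA
  set B := ∑ i : Fin n, w i * b i with hB
  set C := ∑ i : Fin n, w i * c i with hC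
  set D := ∑ i : Fin n, w i * d i with hD
  set W := ∑ j : Fin n, w j * w j with hW
  have key : ∀ j : Fin n,
      (a j - t * A * w j) * (b j - t * B * w j)
        - (c j - t * C * w j) * (d j - t * D * w j)
      = (a j * b j - c j * d j)
        + ((-(t * B)) * (w j * a j) + (-(t * A)) * (w j * b j)
          + (t * D) * (w j * c j) + (t * C) * (w j * d j)
          + (t * t * (A * B - C * D)) * (w j * w j)) := fun j => by ring
  rw [Finset.sum_congr rfl fun j _ => key j, Finset.sum_add_distrib]
  simp only [Finset.sum_add_distrib, ← Finset.mul_sum, ← hA, ← hB, ← hC, ← hD, ← hW]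
  linear_combination (A * B - C * D) * h


lemma s16c_sq (n : ℕ) (hn : 1 ≤ n) : (n : ℝ) * s16c n ^ 2 = 1 := by
  have h0 : (0:ℝ) < n := by exact_mod_cast hn
  unfold s16c
  rw [div_pow, one_pow, Real.sq_sqrt h0.le]
  field_simp

lemma s16_Wsum (n : ℕ) (hn : 1 ≤ n) :
    ∑ j : Fin n, s16w n j * s16w n j = 2 - 2 * s16c n := by
  have key : ∀ j : Fin n, s16w n j * s16w n j
      = s16c n ^ 2 + (if j = (⟨0, by omega⟩ : Fin n) then 1 - 2 * s16c n else 0) := by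
    intro j
    have : ((j:ℕ) = 0) ↔ (j = (⟨0, by omega⟩ : Fin n)) := by
      constructor <;> intro h <;> [exact Fin.ext h; exact congrArg Fin.val h]
    unfold s16w
    by_cases h : j = (⟨0, by omega⟩ : Fin n)
    · rw [if_pos (this.mpr h), if_pos h]; ring
    · rw [if_neg (fun hh => h (this.mp hh)), if_neg h]; ring
  rw [Finset.sum_congr rfl fun j _ => key j, Finset.sum_add_distrib,
    Finset.sum_const, Finset.sum_ite_eq' Finset.univ]
  simp only [Finset.mem_univ, if_pos, Finset.card_univ, Fintype.card_fin, nsmul_eq_mul]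
  have := s16c_sq n hn
  nlinarith [this]

lemma s16_coeff (n : ℕ) :
    s16t n * s16t n * (2 - 2 * s16c n) = 2 * s16t n := by
  by_cases hc : (1 : ℝ) - s16c n = 0
  · simp [s16t, hc]
  · have h1 : s16t n * (1 - s16c n) = 1 := by rw [s16t, one_div, inv_mul_cancel₀ hc]
    linear_combination (2 * s16t n) * h1


lemma s16S_sympl (n : ℕ) (hn : 1 ≤ n) : IsLinearSymplectic n (s16S n) := by
  intro u v
  unfold symplForm
  simp only [s16S_even, s16S_odd]
  exact sum_reflect n (s16w n)
    (fun j => u ⟨2 * (j : ℕ), by have := j.isLt; omega⟩)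
    (fun j => v ⟨2 * (j : ℕ) + 1, by have := j.isLt; omega⟩)
    (fun j => u ⟨2 * (j : ℕ) + 1, by have := j.isLt; omega⟩)
    (fun j => v ⟨2 * (j : ℕ), by have := j.isLt; omega⟩)
    (s16t n) (by rw [s16_Wsum n hn]; exact s16_coeff n)



lemma s16_key (n : ℕ) (hn : 1 ≤ n) (y : Fin n → ℝ) :
    y ⟨0, by omega⟩ - s16t n * (∑ j : Fin n, s16w n j * y j) * s16w n ⟨0, by omega⟩
      = s16c n * ∑ j : Fin n, y j := by
  have hE : ∑ j : Fin n, s16w n j * y j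
      = y ⟨0, by omega⟩ - s16c n * ∑ j : Fin n, y j := by
    have key : ∀ j : Fin n, s16w n j * y j
        = (if j = (⟨0, by omega⟩ : Fin n) then y j else 0) - s16c n * y j := by
      intro j
      have hiff : ((j : ℕ) = 0) = (j = (⟨0, by omega⟩ : Fin n)) :=
        propext ⟨fun h => Fin.ext h, fun h => congrArg Fin.val h⟩
      unfold s16w
      simp only [hiff]
      split <;> ring
    rw [Finset.sum_congr rfl fun j _ => key j, Finset.sum_sub_distrib,
      Finset.sum_ite_eq' Finset.univ, ← Finset.mul_sum]
    simp
  have hw0 : s16w n ⟨0, by omega⟩ = 1 - s16c n := by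
    unfold s16w; rw [if_pos rfl]
  rw [hE, hw0]
  by_cases hc : (1 : ℝ) - s16c n = 0
  · have ht : s16t n = 0 := by simp [s16t, hc]
    have hn1 : n = 1 := by
      have h2 := s16c_sq n hn
      have hc1 : s16c n = 1 := by linarith
      rw [hc1] at h2
      norm_num at h2
      exact_mod_cast h2
    subst hn1
    have hc1 : s16c 1 = 1 := by simp [s16c]
    rw [ht, hc1]
    simp
  · have h1 : s16t n * (1 - s16c n) = 1 := by rw [s16t, one_div, inv_mul_cancel₀ hc]
    linear_combination (-(y ⟨0, by omega⟩ - s16c n * ∑ j : Fin n, y j)) * h1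

lemma s16S_apply0 (n : ℕ) (hn : 1 ≤ n) (x : EuclideanSpace ℝ (Fin (2 * n)))
    (h : 0 < 2 * n) :
    s16S n x ⟨0, h⟩
      = s16c n * ∑ j : Fin n, x ⟨2 * (j : ℕ), by have := j.isLt; omega⟩ := by
  have h0 : (⟨0, h⟩ : Fin (2 * n))
      = ⟨2 * ((⟨0, by omega⟩ : Fin n) : ℕ), by omega⟩ := Fin.ext (by simp)
  rw [h0, s16S_even]
  exact s16_key n hn (fun j => x ⟨2 * (j : ℕ), by have := j.isLt; omega⟩)

lemma s16S_apply1 (n : ℕ) (hn : 1 ≤ n) (x : EuclideanSpace ℝ (Fin (2 * n)))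
    (h : 1 < 2 * n) :
    s16S n x ⟨1, h⟩
      = s16c n * ∑ j : Fin n, x ⟨2 * (j : ℕ) + 1, by have := j.isLt; omega⟩ := by
  have h0 : (⟨1, h⟩ : Fin (2 * n))
      = ⟨2 * ((⟨0, by omega⟩ : Fin n) : ℕ) + 1, by omega⟩ := Fin.ext (by simp)
  rw [h0, s16S_odd]
  exact s16_key n hn (fun j => x ⟨2 * (j : ℕ) + 1, by have := j.isLt; omega⟩)



lemma sum_range_two_mul' (f : ℕ → ℝ) (n : ℕ) :
    ∑ i ∈ Finset.range (2 * n), f i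
      = ∑ j ∈ Finset.range n, (f (2 * j) + f (2 * j + 1)) := by
  induction n with
  | zero => simp
  | succ m ih =>
    rw [Finset.sum_range_succ, ← ih, show 2 * (m + 1) = (2 * m + 1) + 1 by ring,
      Finset.sum_range_succ, Finset.sum_range_succ]
    ring

set_option maxHeartbeats 1000000 in
lemma s16_bound (n : ℕ) (hn : 1 ≤ n) (p : ℝ) (hp1 : 1 ≤ p)
    (x : EuclideanSpace ℝ (Fin (2 * n))) (hx : ∑ i, |x i| ^ p ≤ 1) :
    (s16c n * ∑ j : Fin n, x ⟨2 * (j : ℕ), by have := j.isLt; omega⟩) ^ 2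
      + (s16c n * ∑ j : Fin n, x ⟨2 * (j : ℕ) + 1, by have := j.isLt; omega⟩) ^ 2
      ≤ 2 * ((2 * n : ℕ) : ℝ) ^ (1 - 2 / p) := by
  have hp0 : 0 < p := by linarith
  have hm0 : (0 : ℝ) < ((2 * n : ℕ) : ℝ) := by
    have : 0 < 2 * n := by omega
    exact_mod_cast this
  set f : ℕ → ℝ := fun k => if h : k < 2 * n then |x ⟨k, h⟩| else 0 with hf
  set T := ∑ i : Fin (2 * n), |x i| with hTdef
  set Te := ∑ j : Fin n, |x ⟨2 * (j : ℕ), by have := j.isLt; omega⟩| with hTedef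
  set To := ∑ j : Fin n, |x ⟨2 * (j : ℕ) + 1, by have := j.isLt; omega⟩| with hTodef
  have hT0 : 0 ≤ T := Finset.sum_nonneg fun i _ => abs_nonneg _
  have hTe0 : 0 ≤ Te := Finset.sum_nonneg fun i _ => abs_nonneg _
  have hTo0 : 0 ≤ To := Finset.sum_nonneg fun i _ => abs_nonneg _
  -- split of the sum
  have hsplit : Te + To = T := by
    have h1 : T = ∑ i ∈ Finset.range (2 * n), f i := by
      rw [← Fin.sum_univ_eq_sum_range]
      exact Finset.sum_congr rfl fun i _ => by simp [hf, i.isLt]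
    have h2 : Te = ∑ j ∈ Finset.range n, f (2 * j) := by
      rw [← Fin.sum_univ_eq_sum_range (fun j => f (2 * j)) n]
      refine Finset.sum_congr rfl fun j _ => ?_
      have hj : 2 * (j : ℕ) < 2 * n := by have := j.isLt; omega
      simp [hf, hj]
    have h3 : To = ∑ j ∈ Finset.range n, f (2 * j + 1) := by
      rw [← Fin.sum_univ_eq_sum_range (fun j => f (2 * j + 1)) n]
      refine Finset.sum_congr rfl fun j _ => ?_
      have hj : 2 * (j : ℕ) + 1 < 2 * n := by have := j.isLt; omega
      simp [hf, hj]
    rw [h1, h2, h3, sum_range_two_mul' f n, Finset.sum_add_distrib]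
  -- Jensen / power mean inequality
  have hT : T ≤ ((2 * n : ℕ) : ℝ) ^ (1 - 1 / p) := by
    have hw : ∀ i ∈ Finset.univ, (0 : ℝ) ≤ (fun _ : Fin (2 * n) => 1 / ((2 * n : ℕ) : ℝ)) i :=
      fun i _ => by positivity
    have hw' : ∑ _i : Fin (2 * n), (1 : ℝ) / ((2 * n : ℕ) : ℝ) = 1 := by
      rw [Finset.sum_const, Finset.card_univ, Fintype.card_fin, nsmul_eq_mul]
      field_simp
    have hz : ∀ i ∈ Finset.univ, (0 : ℝ) ≤ |x i| := fun i _ => abs_nonneg _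
    have jensen := Real.arith_mean_le_rpow_mean Finset.univ
      (fun _ : Fin (2 * n) => 1 / ((2 * n : ℕ) : ℝ)) (fun i => |x i|) hw hw' hz hp1
    rw [← Finset.mul_sum, ← Finset.mul_sum] at jensen
    have hle : (1 / ((2 * n : ℕ) : ℝ)) * ∑ i, |x i| ^ p ≤ 1 / ((2 * n : ℕ) : ℝ) := by
      have := mul_le_of_le_one_right (le_of_lt (by positivity : (0:ℝ) < 1 / ((2 * n : ℕ) : ℝ))) hx
      linarith [this]
    have h4 : ((1 / ((2 * n : ℕ) : ℝ)) * ∑ i, |x i| ^ p) ^ (1 / p)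
        ≤ (1 / ((2 * n : ℕ) : ℝ)) ^ (1 / p) := by
      apply Real.rpow_le_rpow _ hle (by positivity)
      have : (0:ℝ) ≤ ∑ i, |x i| ^ p :=
        Finset.sum_nonneg fun i _ => Real.rpow_nonneg (abs_nonneg _) p
      positivity
    have h5 : (1 / ((2 * n : ℕ) : ℝ)) * T ≤ (1 / ((2 * n : ℕ) : ℝ)) ^ (1 / p) :=
      le_trans jensen h4
    have h6 : ((1:ℝ) / ((2 * n : ℕ) : ℝ)) ^ ((1:ℝ) / p)
        = ((2 * n : ℕ) : ℝ) ^ (-(1 / p)) := by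
      rw [one_div, Real.inv_rpow hm0.le, ← Real.rpow_neg hm0.le]
    have h7 : T ≤ ((2 * n : ℕ) : ℝ) * ((2 * n : ℕ) : ℝ) ^ (-(1 / p)) := by
      rw [← h6]
      calc T = ((2 * n : ℕ) : ℝ) * ((1 / ((2 * n : ℕ) : ℝ)) * T) := by field_simp
      _ ≤ ((2 * n : ℕ) : ℝ) * (1 / ((2 * n : ℕ) : ℝ)) ^ (1 / p) := by
          exact mul_le_mul_of_nonneg_left h5 hm0.le
    calc T ≤ ((2 * n : ℕ) : ℝ) * ((2 * n : ℕ) : ℝ) ^ (-(1 / p)) := h7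
    _ = ((2 * n : ℕ) : ℝ) ^ (1 - 1 / p) := by
        nth_rewrite 1 [← Real.rpow_one ((2 * n : ℕ) : ℝ)]
        rw [← Real.rpow_add hm0]
        congr 1
  -- combine
  have habsE : |∑ j : Fin n, x ⟨2 * (j : ℕ), by have := j.isLt; omega⟩| ≤ Te :=
    Finset.abs_sum_le_sum_abs _ _
  have habsO : |∑ j : Fin n, x ⟨2 * (j : ℕ) + 1, by have := j.isLt; omega⟩| ≤ To :=
    Finset.abs_sum_le_sum_abs _ _
  have ha2 : (∑ j : Fin n, x ⟨2 * (j : ℕ), by have := j.isLt; omega⟩) ^ 2 ≤ Te ^ 2 := by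
    rw [← sq_abs]; exact pow_le_pow_left₀ (abs_nonneg _) habsE 2
  have hb2 : (∑ j : Fin n, x ⟨2 * (j : ℕ) + 1, by have := j.isLt; omega⟩) ^ 2 ≤ To ^ 2 := by
    rw [← sq_abs]; exact pow_le_pow_left₀ (abs_nonneg _) habsO 2
  have hc2 : 0 ≤ s16c n ^ 2 := sq_nonneg _
  have hT2 : T ^ 2 ≤ (((2 * n : ℕ) : ℝ) ^ (1 - 1 / p)) ^ 2 := pow_le_pow_left₀ hT0 hT 2
  have hpow : (((2 * n : ℕ) : ℝ) ^ (1 - 1 / p)) ^ (2:ℕ) = ((2 * n : ℕ) : ℝ) ^ (2 - 2 / p) := by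
    rw [← Real.rpow_natCast (((2 * n : ℕ) : ℝ) ^ (1 - 1 / p)) 2, ← Real.rpow_mul hm0.le]
    norm_num
    ring_nf
  have hfinal : s16c n ^ 2 * ((2 * n : ℕ) : ℝ) ^ (2 - 2 / p)
      = 2 * ((2 * n : ℕ) : ℝ) ^ (1 - 2 / p) := by
    rw [show (2 : ℝ) - 2 / p = 1 + (1 - 2 / p) by ring, Real.rpow_add hm0, Real.rpow_one]
    have hcsq := s16c_sq n hn
    have hcast : ((2 * n : ℕ) : ℝ) = 2 * (n : ℝ) := by push_cast; ring
    rw [hcast]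
    nlinarith [Real.rpow_pos_of_pos (show (0:ℝ) < 2 * (n:ℝ) by positivity) (1 - 2/p)]
  calc (s16c n * ∑ j : Fin n, x ⟨2 * (j : ℕ), by have := j.isLt; omega⟩) ^ 2
      + (s16c n * ∑ j : Fin n, x ⟨2 * (j : ℕ) + 1, by have := j.isLt; omega⟩) ^ 2
      ≤ s16c n ^ 2 * (Te + To) ^ 2 := by
        rw [mul_pow, mul_pow]
        nlinarith [mul_nonneg hTe0 hTo0, mul_nonneg hc2 (mul_nonneg hTe0 hTo0)]
  _ = s16c n ^ 2 * T ^ 2 := by rw [hsplit]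
  _ ≤ s16c n ^ 2 * (((2 * n : ℕ) : ℝ) ^ (1 - 1 / p)) ^ 2 := by
        exact mul_le_mul_of_nonneg_left hT2 hc2
  _ = s16c n ^ 2 * ((2 * n : ℕ) : ℝ) ^ (2 - 2 / p) := by rw [hpow]
  _ = 2 * ((2 * n : ℕ) : ℝ) ^ (1 - 2 / p) := hfinal


/-- for `1 ≤ p ≤ 2`, `c^Z_lin(B_p^{2n}) ≤ 2π·(2n)^{1−2/p}`. -/
theorem statement16 (n : ℕ) (hn : 1 ≤ n) (p : ℝ) (hp1 : 1 ≤ p) (hp2 : p ≤ 2) :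
    linCylCapacity n {x : EuclideanSpace ℝ (Fin (2 * n)) | ∑ i, |x i| ^ p ≤ 1} ≤
      2 * Real.pi * ((2 * n : ℕ) : ℝ) ^ (1 - 2 / p) := by
  have hm0 : (0 : ℝ) < ((2 * n : ℕ) : ℝ) := by
    have : 0 < 2 * n := by omega
    exact_mod_cast this
  set b : ℝ := 2 * ((2 * n : ℕ) : ℝ) ^ (1 - 2 / p) with hbdef
  have hb0 : 0 < b := by
    have := Real.rpow_pos_of_pos hm0 (1 - 2 / p)
    positivity
  have hkey : ∀ x ∈ {x : EuclideanSpace ℝ (Fin (2 * n)) | ∑ i, |x i| ^ p ≤ 1},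
      coordOr (s16S n x) 0 ^ 2 + coordOr (s16S n x) 1 ^ 2 ≤ b := by
    intro x hx
    have h0 : (0 : ℕ) < 2 * n := by omega
    have h1 : (1 : ℕ) < 2 * n := by omega
    rw [coordOr, dif_pos h0, coordOr, dif_pos h1, s16S_apply0 n hn x h0,
      s16S_apply1 n hn x h1]
    exact s16_bound n hn p hp1 x hx
  have hgoal : 2 * Real.pi * ((2 * n : ℕ) : ℝ) ^ (1 - 2 / p) = Real.pi * b := by
    rw [hbdef]; ring
  rw [hgoal, linCylCapacity]
  have hbdd : BddBelow {c : ℝ | ∃ r : ℝ, 0 < r ∧ c = Real.pi * r ^ 2 ∧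
      ∃ S : EuclideanSpace ℝ (Fin (2 * n)) →ₗ[ℝ] EuclideanSpace ℝ (Fin (2 * n)),
        IsLinearSymplectic n S ∧
          S '' {x : EuclideanSpace ℝ (Fin (2 * n)) | ∑ i, |x i| ^ p ≤ 1}
            ⊆ symplCylinder n r} := by
    refine ⟨0, fun c hc => ?_⟩
    obtain ⟨r, hr, rfl, -⟩ := hc
    positivity
  refine le_of_forall_pos_le_add fun ε hε => ?_
  set r : ℝ := Real.sqrt (b + ε / Real.pi) with hrdef
  have hεπ : 0 < ε / Real.pi := div_pos hε Real.pi_pos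
  have hr2 : r ^ 2 = b + ε / Real.pi := Real.sq_sqrt (by positivity)
  have hrpos : 0 < r := Real.sqrt_pos.mpr (by positivity)
  have hmem : Real.pi * r ^ 2 ∈ {c : ℝ | ∃ r : ℝ, 0 < r ∧ c = Real.pi * r ^ 2 ∧
      ∃ S : EuclideanSpace ℝ (Fin (2 * n)) →ₗ[ℝ] EuclideanSpace ℝ (Fin (2 * n)),
        IsLinearSymplectic n S ∧
          S '' {x : EuclideanSpace ℝ (Fin (2 * n)) | ∑ i, |x i| ^ p ≤ 1}
            ⊆ symplCylinder n r} := by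
    refine ⟨r, hrpos, rfl, s16S n, s16S_sympl n hn, ?_⟩
    rintro y ⟨x, hx, rfl⟩
    show coordOr (s16S n x) 0 ^ 2 + coordOr (s16S n x) 1 ^ 2 < r ^ 2
    rw [hr2]
    have := hkey x hx
    linarith
  calc sInf _ ≤ Real.pi * r ^ 2 := csInf_le hbdd hmem
  _ = Real.pi * b + ε := by
      rw [hr2, mul_add, mul_div_cancel₀ ε (ne_of_gt Real.pi_pos)]


end
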